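/- Determinism of the constructive behavioral semantics: for all Kernel Esterel programs p, constructive events E, E₁', E₂', completion codes k₁, k₂, and programs p₁', p₂', if both E ⊢ p → (E₁', k₁, p₁') and E ⊢ p → (E₂', k₂, p₂') are derivable in the constructive behavioral semantics, then E₁' = E₂', k₁ = k₂, and p₁' = p₂'. -/
import Mathlib


namespace EsterelCBS

/-- Signals are represented by natural numbers. -/
abbrev Signal := ℕ

/-- Kernel Esterel statements.  `done k` unifies `nothing` (k = 0), `pause` (k = 1)
and `exit k` (k ≥ 2).  `awaitImm pol s` waits for `s` to have the status given by
the polarity `pol` (`awaitImm true s` is the kernel statement `await immediate s`;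
the negative polarity is used in the derivative of `suspend`). -/
inductive Stmt : Type
  | done (k : ℕ)
  | emit (s : Signal)
  | awaitImm (pol : Bool) (s : Signal)
  | present (s : Signal) (p q : Stmt)
  | suspend (s : Signal) (p : Stmt)
  | seq (p q : Stmt)
  | par (p q : Stmt)
  | loop (p : Stmt)
  | trap (p : Stmt)
  | shift (p : Stmt)
  | sig (s : Signal) (p : Stmt)
  deriving DecidableEq

/-- Constructive signal statuses: present (+), absent (−), or unknown (⊥). -/
inductive CStatus : Type
  | pos
  | neg
  | bot
  deriving DecidableEq

/-- Statuses are combined by "present dominates, unknown next". -/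
def CStatus.or : CStatus → CStatus → CStatus
  | .pos, _ => .pos
  | _, .pos => .pos
  | .bot, _ => .bot
  | _, .bot => .bot
  | _, _ => .neg

/-- A constructive event is a finite map from signals to constructive statuses;
`none` means the signal is not in scope (not visible). -/
abbrev CEvent := Signal → Option CStatus

namespace CEvent

/-- The empty output event relative to `E`: every visible signal is absent. -/
def blank (E : CEvent) : CEvent := fun s => (E s).map fun _ => CStatus.neg

/-- The singleton output event emitting `s` (all other visible signals absent). -/
def single (E : CEvent) (s : Signal) : CEvent :=
  fun t => if t = s then (E t).map fun _ => CStatus.pos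
           else (E t).map fun _ => CStatus.neg

/-- Union of two output events. -/
def union (E₁ E₂ : CEvent) : CEvent := fun s =>
  match E₁ s, E₂ s with
  | some a, some b => some (a.or b)
  | some a, none => some a
  | none, o => o

/-- Update the status of a signal (possibly adding it to the domain). -/
def update (E : CEvent) (s : Signal) (v : CStatus) : CEvent :=
  fun t => if t = s then some v else E t

/-- Restriction of an output event by a local signal declaration: the binding of
the (new) signal `s` is replaced by the appropriate status − for the (old) `s`
(which is absent if the old `s` was not in scope). -/
def restrict (E' : CEvent) (s : Signal) (old : Option CStatus) : CEvent :=
  fun t => if t = s then old.map (fun _ => CStatus.neg) else E' t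

/-- The domain of an event: the set of signals in scope. -/
def dom (E : CEvent) : Set Signal := {s | E s ≠ none}

/-- A constructive event is total when no signal is mapped to ⊥. -/
def Total (E : CEvent) : Prop := ∀ s, E s ≠ some CStatus.bot

end CEvent

/-- Completion-code shift `↑` used by the `shift` statement. -/
def kup (k : ℕ) : ℕ := if 2 ≤ k then k + 1 else k

/-- Completion-code decrement `↓` used by the `trap` statement. -/
def kdown (k : ℕ) : ℕ := if k < 2 then k else if k = 2 then 0 else k - 1

/-- The δ function killing derivatives when the completion code is not 1. -/
def delta (k : ℕ) (p : Stmt) : Stmt := if k = 1 then p else .done 0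

/-- The constructive status corresponding to a polarity. -/
def polSt : Bool → CStatus
  | true => .pos
  | false => .neg

/-- Pairwise max of two sets of completion codes
(`Max K L = { max k l | k ∈ K, l ∈ L }`). -/
def codeMax (K L : Finset ℕ) : Finset ℕ := K.biUnion fun k => L.image (max k)

mutual

/-- `must p E = (Must_S(p,E), Must_K(p,E))`: the signals that must be emitted and
the completion codes that must be returned by `p` under `E` (paper Fig. 2). -/
def must : Stmt → CEvent → Finset Signal × Finset ℕ
  | .done k, _ => (∅, {k})
  | .emit s, _ => ({s}, {0})
  | .awaitImm pol s, E =>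
      if E s = some (polSt pol) then (∅, {0})
      else if E s = some (polSt (!pol)) then (∅, {1})
      else (∅, ∅)
  | .present s p q, E =>
      if E s = some .pos then must p E
      else if E s = some .neg then must q E
      else (∅, ∅)
  | .suspend _ p, E => must p E
  | .seq p q, E =>
      if 0 ∈ (must p E).2 then
        ((must p E).1 ∪ (must q E).1, (must q E).2)
      else must p E
  | .par p q, E =>
      ((must p E).1 ∪ (must q E).1, codeMax (must p E).2 (must q E).2)
  | .loop p, E => must p E
  | .trap p, E => ((must p E).1, (must p E).2.image kdown)
  | .shift p, E => ((must p E).1, (must p E).2.image kup)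
  | .sig s p, E =>
      if s ∈ (must p (E.update s .bot)).1 then
        (((must p (E.update s .pos)).1).erase s, (must p (E.update s .pos)).2)
      else if s ∉ (can true p (E.update s .bot)).1 then
        (((must p (E.update s .neg)).1).erase s, (must p (E.update s .neg)).2)
      else
        (((must p (E.update s .bot)).1).erase s, (must p (E.update s .bot)).2)

/-- `can b p E = (Can^b_S(p,E), Can^b_K(p,E))`: the signals that can be emitted
and the completion codes that can be returned by `p` under `E` (paper Fig. 2). -/
def can : Bool → Stmt → CEvent → Finset Signal × Finset ℕ
  | _, .done k, _ => (∅, {k})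
  | _, .emit s, _ => ({s}, {0})
  | _, .awaitImm pol s, E =>
      if E s = some (polSt pol) then (∅, {0})
      else if E s = some (polSt (!pol)) then (∅, {1})
      else (∅, {0, 1})
  | b, .present s p q, E =>
      if E s = some .pos then can b p E
      else if E s = some .neg then can b q E
      else ((can false p E).1 ∪ (can false q E).1,
            (can false p E).2 ∪ (can false q E).2)
  | b, .suspend _ p, E => can b p E
  | b, .seq p q, E =>
      if 0 ∉ (can b p E).2 then can b p E
      else if 0 ∈ (must p E).2 ∧ b = true then
        ((can b p E).1 ∪ (can true q E).1,
         ((can b p E).2.erase 0) ∪ (can true q E).2)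
      else
        ((can b p E).1 ∪ (can false q E).1,
         ((can b p E).2.erase 0) ∪ (can false q E).2)
  | b, .par p q, E =>
      ((can b p E).1 ∪ (can b q E).1, codeMax (can b p E).2 (can b q E).2)
  | b, .loop p, E => can b p E
  | b, .trap p, E => ((can b p E).1, (can b p E).2.image kdown)
  | b, .shift p, E => ((can b p E).1, (can b p E).2.image kup)
  | b, .sig s p, E =>
      if s ∈ (must p (E.update s .bot)).1 ∧ b = true then
        (((can b p (E.update s .pos)).1).erase s, (can b p (E.update s .pos)).2)
      else if s ∉ (can true p (E.update s .bot)).1 then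
        (((can b p (E.update s .neg)).1).erase s, (can b p (E.update s .neg)).2)
      else
        (((can b p (E.update s .bot)).1).erase s, (can b p (E.update s .bot)).2)

end

/-- The constructive behavioral semantics (CBS): `CBS E p E' k p'` means
`E ⊢ p → (E', k, p')`.  The rules are the same as for the logical behavioral
semantics except for the local signal declaration rules, which use `must`/`can`. -/
inductive CBS : CEvent → Stmt → CEvent → ℕ → Stmt → Prop
  | done {E : CEvent} {k : ℕ} :
      CBS E (.done k) E.blank k (.done 0)
  | emit {E : CEvent} {s : Signal} (h : E s ≠ none) :
      CBS E (.emit s) (E.single s) 0 (.done 0)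
  | awaitP {E : CEvent} {pol : Bool} {s : Signal}
      (h : E s = some (polSt pol)) :
      CBS E (.awaitImm pol s) E.blank 0 (.done 0)
  | awaitM {E : CEvent} {pol : Bool} {s : Signal}
      (h : E s = some (polSt (!pol))) :
      CBS E (.awaitImm pol s) E.blank 1 (.awaitImm pol s)
  | presentP {E E' : CEvent} {s : Signal} {p q p' : Stmt} {k : ℕ}
      (h : E s = some .pos) (hp : CBS E p E' k p') :
      CBS E (.present s p q) E' k p'
  | presentM {E E' : CEvent} {s : Signal} {p q q' : Stmt} {k : ℕ}
      (h : E s = some .neg) (hq : CBS E q E' k q') :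
      CBS E (.present s p q) E' k q'
  | suspend {E E' : CEvent} {s : Signal} {p p' : Stmt} {k : ℕ}
      (hp : CBS E p E' k p') :
      CBS E (.suspend s p) E' k
        (delta k (.seq (.awaitImm false s) (.suspend s p')))
  | seqK {E E' : CEvent} {p q p' : Stmt} {k : ℕ}
      (h : k ≠ 0) (hp : CBS E p E' k p') :
      CBS E (.seq p q) E' k (delta k (.seq p' q))
  | seq0 {E E₁ E₂ : CEvent} {p q p' q' : Stmt} {k : ℕ}
      (hp : CBS E p E₁ 0 p') (hq : CBS E q E₂ k q') :
      CBS E (.seq p q) (E₁.union E₂) k q'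
  | loop {E E' : CEvent} {p p' : Stmt} {k : ℕ}
      (h : k ≠ 0) (hp : CBS E p E' k p') :
      CBS E (.loop p) E' k (delta k (.seq p' (.loop p)))
  | trap {E E' : CEvent} {p p' : Stmt} {k : ℕ}
      (hp : CBS E p E' k p') :
      CBS E (.trap p) E' (kdown k) (delta k (.trap p'))
  | shift {E E' : CEvent} {p p' : Stmt} {k : ℕ}
      (hp : CBS E p E' k p') :
      CBS E (.shift p) E' (kup k) (delta k (.shift p'))
  | par {E E₁ E₂ : CEvent} {p q p' q' : Stmt} {k₁ k₂ : ℕ}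
      (hp : CBS E p E₁ k₁ p') (hq : CBS E q E₂ k₂ q') :
      CBS E (.par p q) (E₁.union E₂) (max k₁ k₂)
        (delta (max k₁ k₂) (.par p' q'))
  | sigP {E E' : CEvent} {s : Signal} {p p' : Stmt} {k : ℕ}
      (h : s ∈ (must p (E.update s .bot)).1)
      (hp : CBS (E.update s .pos) p E' k p') :
      CBS E (.sig s p) (E'.restrict s (E s)) k (delta k (.sig s p'))
  | sigM {E E' : CEvent} {s : Signal} {p p' : Stmt} {k : ℕ}
      (h : s ∉ (can true p (E.update s .bot)).1)
      (hp : CBS (E.update s .neg) p E' k p') :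
      CBS E (.sig s p) (E'.restrict s (E s)) k (delta k (.sig s p'))

end EsterelCBS

namespace EsterelCBS

theorem codeMax_mono {K K' L L' : Finset ℕ} (hK : K ⊆ K') (hL : L ⊆ L') :
    codeMax K L ⊆ codeMax K' L' := by
  intro x hx
  simp only [codeMax, Finset.mem_biUnion, Finset.mem_image] at hx ⊢
  obtain ⟨k, hk, l, hl, rfl⟩ := hx
  exact ⟨k, hK hk, l, hL hl, rfl⟩

/-- Must ⊆ Can⁺ (both signal and code components). -/
theorem must_sub_can (p : Stmt) : ∀ E : CEvent,
    (must p E).1 ⊆ (can true p E).1 ∧ (must p E).2 ⊆ (can true p E).2 := by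
  induction p with
  | done k => intro E; simp [must, can]
  | emit s => intro E; simp [must, can]
  | awaitImm pol s =>
    intro E
    simp only [must, can]
    split_ifs <;> simp
  | present s p q ihp ihq =>
    intro E
    simp only [must, can]
    split_ifs with h1 h2
    · exact ihp E
    · exact ihq E
    · simp
  | suspend s p ihp => intro E; simpa [must, can] using ihp E
  | seq p q ihp ihq =>
    intro E
    obtain ⟨hps, hpk⟩ := ihp E
    obtain ⟨hqs, hqk⟩ := ihq E
    simp only [must, can]
    by_cases h0 : 0 ∈ (must p E).2
    · have hc : 0 ∈ (can true p E).2 := hpk h0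
      rw [if_pos h0, if_neg (not_not.mpr hc), if_pos ⟨h0, trivial⟩]
      refine ⟨Finset.union_subset_union hps hqs, hqk.trans Finset.subset_union_right⟩
    · rw [if_neg h0]
      by_cases hc : 0 ∈ (can true p E).2
      · rw [if_neg (not_not.mpr hc), if_neg (by simp [h0])]
        refine ⟨hps.trans Finset.subset_union_left, ?_⟩
        intro k hk
        exact Finset.mem_union_left _
          (Finset.mem_erase.mpr ⟨fun h => h0 (h ▸ hk), hpk hk⟩)
      · rw [if_pos hc]
        exact ⟨hps, hpk⟩
  | par p q ihp ihq =>
    intro E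
    obtain ⟨hps, hpk⟩ := ihp E
    obtain ⟨hqs, hqk⟩ := ihq E
    simp only [must, can]
    exact ⟨Finset.union_subset_union hps hqs, codeMax_mono hpk hqk⟩
  | loop p ihp => intro E; simpa [must, can] using ihp E
  | trap p ihp =>
    intro E
    obtain ⟨hps, hpk⟩ := ihp E
    exact ⟨hps, Finset.image_subset_image hpk⟩
  | shift p ihp =>
    intro E
    obtain ⟨hps, hpk⟩ := ihp E
    exact ⟨hps, Finset.image_subset_image hpk⟩
  | sig s p ihp =>
    intro E
    simp only [must, can]
    by_cases h1 : s ∈ (must p (E.update s .bot)).1 <;>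
    by_cases h2 : s ∈ (can true p (E.update s .bot)).1 <;>
      simp only [h1, h2, not_true, not_false_eq_true, true_and, and_true,
        if_true, if_false, ite_true, ite_false, not_false_iff] <;>
      exact ⟨Finset.erase_subset_erase _ (ihp _).1, (ihp _).2⟩

theorem polSt_ne (pol : Bool) : polSt pol ≠ polSt (!pol) := by
  cases pol <;> simp [polSt]

/-- **Determinism of the constructive behavioral semantics**. -/
theorem cbs_deterministic :
    ∀ (p : Stmt) (E E₁' E₂' : CEvent) (k₁ k₂ : ℕ) (p₁' p₂' : Stmt),
      CBS E p E₁' k₁ p₁' → CBS E p E₂' k₂ p₂' →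
      E₁' = E₂' ∧ k₁ = k₂ ∧ p₁' = p₂' := by
  intro p E E₁' E₂' k₁ k₂ p₁' p₂' h1 h2
  induction h1 generalizing E₂' k₂ p₂' with
  | done => cases h2; exact ⟨rfl, rfl, rfl⟩
  | emit h => cases h2; exact ⟨rfl, rfl, rfl⟩
  | awaitP h =>
    cases h2 with
    | awaitP h' => exact ⟨rfl, rfl, rfl⟩
    | awaitM h' =>
      exact absurd (Option.some_injective _ (h.symm.trans h')) (polSt_ne _)
  | awaitM h =>
    cases h2 with
    | awaitP h' =>
      exact absurd (Option.some_injective _ (h'.symm.trans h)) (polSt_ne _)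
    | awaitM h' => exact ⟨rfl, rfl, rfl⟩
  | presentP h hp ih =>
    cases h2 with
    | presentP h' hp' => exact ih _ _ _ hp'
    | presentM h' hp' => simp [h] at h'
  | presentM h hq ih =>
    cases h2 with
    | presentP h' hp' => simp [h] at h'
    | presentM h' hq' => exact ih _ _ _ hq'
  | suspend hp ih =>
    cases h2 with
    | suspend hp' =>
      obtain ⟨hE, hk, hpp⟩ := ih _ _ _ hp'
      subst hE; subst hk; subst hpp
      exact ⟨rfl, rfl, rfl⟩
  | seqK h hp ih =>
    cases h2 with
    | seqK h' hp' =>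
      obtain ⟨hE, hk, hpp⟩ := ih _ _ _ hp'
      subst hE; subst hk; subst hpp
      exact ⟨rfl, rfl, rfl⟩
    | seq0 hp' hq' =>
      obtain ⟨_, hk, _⟩ := ih _ _ _ hp'
      exact absurd hk h
  | seq0 hp hq ihp ihq =>
    cases h2 with
    | seqK h' hp' =>
      obtain ⟨_, hk, _⟩ := ihp _ _ _ hp'
      exact absurd hk.symm h'
    | seq0 hp' hq' =>
      obtain ⟨hE1, _, _⟩ := ihp _ _ _ hp'
      obtain ⟨hE2, hk, hq2⟩ := ihq _ _ _ hq'
      subst hE1; subst hE2; subst hk; subst hq2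
      exact ⟨rfl, rfl, rfl⟩
  | loop h hp ih =>
    cases h2 with
    | loop h' hp' =>
      obtain ⟨hE, hk, hpp⟩ := ih _ _ _ hp'
      subst hE; subst hk; subst hpp
      exact ⟨rfl, rfl, rfl⟩
  | trap hp ih =>
    cases h2 with
    | trap hp' =>
      obtain ⟨hE, hk, hpp⟩ := ih _ _ _ hp'
      subst hE; subst hk; subst hpp
      exact ⟨rfl, rfl, rfl⟩
  | shift hp ih =>
    cases h2 with
    | shift hp' =>
      obtain ⟨hE, hk, hpp⟩ := ih _ _ _ hp'
      subst hE; subst hk; subst hpp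
      exact ⟨rfl, rfl, rfl⟩
  | par hp hq ihp ihq =>
    cases h2 with
    | par hp' hq' =>
      obtain ⟨hE1, hk1, hp1⟩ := ihp _ _ _ hp'
      obtain ⟨hE2, hk2, hp2⟩ := ihq _ _ _ hq'
      subst hE1; subst hE2; subst hk1; subst hk2; subst hp1; subst hp2
      exact ⟨rfl, rfl, rfl⟩
  | sigP h hp ih =>
    cases h2 with
    | sigP h' hp' =>
      obtain ⟨hE, hk, hpp⟩ := ih _ _ _ hp'
      subst hE; subst hk; subst hpp
      exact ⟨rfl, rfl, rfl⟩
    | sigM h' hp' =>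
      exact absurd ((must_sub_can _ _).1 h) h'
  | sigM h hp ih =>
    cases h2 with
    | sigP h' hp' =>
      exact absurd ((must_sub_can _ _).1 h') h
    | sigM h' hp' =>
      obtain ⟨hE, hk, hpp⟩ := ih _ _ _ hp'
      subst hE; subst hk; subst hpp
      exact ⟨rfl, rfl, rfl⟩

end EsterelCBS
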